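/- arXiv:1211.3394 — 2 statements merged into one kernel-verified Lean document; each statement's English description precedes it below -/
import Mathlib

section
/- If λ ≥ 3‖Σ‖ then, with H = A₀ − Â, one has ‖P⊥_{A₀}(H)‖_* ≤ 5 ‖P_{A₀}(H)‖_*. -/
open MeasureTheory ProbabilityTheory Matrix
open scoped ENNReal

set_option linter.unusedVariables false

/-- Frobenius norm of a matrix. -/
noncomputable def frobNorm {p l : ℕ} (A : Matrix (Fin p) (Fin l) ℝ) : ℝ :=
  Real.sqrt (∑ i, ∑ j, (A i j)^2)

/-- Nuclear (trace) norm: the sum of the singular values of `A`. -/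
noncomputable def nucNorm {p l : ℕ} (A : Matrix (Fin p) (Fin l) ℝ) : ℝ :=
  ∑ i, Real.sqrt ((show (Aᵀ * A).IsHermitian by
    simpa [Matrix.conjTranspose_eq_transpose_of_trivial] using
      Matrix.isHermitian_conjTranspose_mul_self A).eigenvalues i)

/-- Operator norm (largest singular value) of a matrix. -/
noncomputable def opNorm {p l : ℕ} (A : Matrix (Fin p) (Fin l) ℝ) : ℝ :=
  ‖LinearMap.toContinuousLinearMap (Matrix.toEuclideanLin A)‖

/-- Trace inner product `⟨A,B⟩ = tr(AᵀB)`. -/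
def mInner {p l : ℕ} (A B : Matrix (Fin p) (Fin l) ℝ) : ℝ :=
  ∑ i, ∑ j, A i j * B i j

/-- The matrix `X = W φ(t)ᵀ`. -/
noncomputable def Xmat {p : ℕ} (l : ℕ) (φ : ℕ → ℝ → ℝ) (w : Fin p → ℝ) (x : ℝ) :
    Matrix (Fin p) (Fin l) ℝ :=
  Matrix.of fun a b => w a * φ (b : ℕ) x

/-- The remainder `ρ^(m)` of the expansion of `f` over the first `m` basis functions,
with coefficients `⟨f, φ_j⟩_{L²(dμ)}`. -/
noncomputable def remainder (μ : Measure ℝ) (φ : ℕ → ℝ → ℝ) (f : ℝ → ℝ)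
    (m : ℕ) (x : ℝ) : ℝ :=
  f x - ∑ j ∈ Finset.range m, (∫ y, f y * φ j y ∂μ) * φ j x

/-- Support of a measure on ℝ. -/
def measSupport (μ : Measure ℝ) : Set ℝ := {x | ∀ U ∈ nhds x, 0 < μ U}

/-- Orthogonal projection onto a subspace, as an endomorphism. -/
noncomputable def projMap {m : ℕ} (S : Submodule ℝ (EuclideanSpace ℝ (Fin m))) :
    EuclideanSpace ℝ (Fin m) →ₗ[ℝ] EuclideanSpace ℝ (Fin m) :=
  S.subtype ∘ₗ (S.orthogonalProjectionOnto).toLinearMap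

/-- Column space of `A` (the span of its left singular vectors). -/
noncomputable def colSpace {p l : ℕ} (A : Matrix (Fin p) (Fin l) ℝ) :
    Submodule ℝ (EuclideanSpace ℝ (Fin p)) :=
  LinearMap.range (Matrix.toEuclideanLin A)

/-- `P⊥_A(B) = P_{S₁(A)⊥} B P_{S₂(A)⊥}`, where `S₁(A)` is the column space of `A`
and `S₂(A)` its row space. -/
noncomputable def perpPart {p l : ℕ} (A B : Matrix (Fin p) (Fin l) ℝ) :
    Matrix (Fin p) (Fin l) ℝ :=
  Matrix.toEuclideanLin.symm
    (projMap (colSpace A)ᗮ ∘ₗ Matrix.toEuclideanLin B ∘ₗ projMap (colSpace Aᵀ)ᗮ)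


open scoped RealInnerProductSpace

namespace StmtAux

variable {p l : ℕ}

/-- basic dot product facts -/
lemma dot_self_nonneg (x : Fin l → ℝ) : 0 ≤ x ⬝ᵥ x := by
  apply Finset.sum_nonneg; intro i _; exact mul_self_nonneg _

lemma dot_self_eq_sum_sq (x : Fin l → ℝ) : x ⬝ᵥ x = ∑ i, (x i)^2 := by
  simp [dotProduct, sq]

lemma abs_dot_le (x y : Fin l → ℝ) :
    |x ⬝ᵥ y| ≤ Real.sqrt (x ⬝ᵥ x) * Real.sqrt (y ⬝ᵥ y) := by
  have h := Finset.sum_mul_sq_le_sq_mul_sq Finset.univ x y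
  rw [← Real.sqrt_sq_eq_abs, ← Real.sqrt_mul (dot_self_nonneg x)]
  apply Real.sqrt_le_sqrt
  rw [dot_self_eq_sum_sq, dot_self_eq_sum_sq]
  simpa [dotProduct] using h

lemma dot_mulVec_mulVec {m : ℕ} (A B : Matrix (Fin m) (Fin l) ℝ) (x y : Fin l → ℝ) :
    (A *ᵥ x) ⬝ᵥ (B *ᵥ y) = x ⬝ᵥ ((Aᵀ * B) *ᵥ y) := by
  rw [dotProduct_mulVec, ← Matrix.vecMul_transpose (A := A), Matrix.vecMul_vecMul,
    ← dotProduct_mulVec]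

/-- bridge: Euclidean norm squared is the dot product -/
lemma norm_sq_eq_dot (x : EuclideanSpace ℝ (Fin l)) : ‖x‖^2 = (x : Fin l → ℝ) ⬝ᵥ x := by
  rw [EuclideanSpace.norm_eq, Real.sq_sqrt (by positivity), dot_self_eq_sum_sq]
  simp [sq_abs]

lemma toEuclideanLin_apply' (A : Matrix (Fin p) (Fin l) ℝ) (x : EuclideanSpace ℝ (Fin l)) :
    (Matrix.toEuclideanLin A x : Fin p → ℝ) = A *ᵥ x := rfl

lemma mulVec_dot_le_opNorm (A : Matrix (Fin p) (Fin l) ℝ) (x : Fin l → ℝ) :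
    (A *ᵥ x) ⬝ᵥ (A *ᵥ x) ≤ (opNorm A)^2 * (x ⬝ᵥ x) := by
  set x' : EuclideanSpace ℝ (Fin l) := WithLp.toLp 2 x with hx'
  have h := (LinearMap.toContinuousLinearMap (Matrix.toEuclideanLin A)).le_opNorm x'
  have h2 : ‖(LinearMap.toContinuousLinearMap (Matrix.toEuclideanLin A)) x'‖^2
      ≤ (opNorm A)^2 * ‖x'‖^2 := by
    rw [← mul_pow]
    exact pow_le_pow_left₀ (norm_nonneg _) h 2
  rw [norm_sq_eq_dot, norm_sq_eq_dot] at h2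
  simpa [LinearMap.coe_toContinuousLinearMap', toEuclideanLin_apply'] using h2

lemma opNorm_le_one_of_dot (A : Matrix (Fin p) (Fin l) ℝ)
    (h : ∀ x : Fin l → ℝ, (A *ᵥ x) ⬝ᵥ (A *ᵥ x) ≤ x ⬝ᵥ x) : opNorm A ≤ 1 := by
  apply ContinuousLinearMap.opNorm_le_bound _ zero_le_one
  intro x
  rw [one_mul]
  have h1 : ‖(LinearMap.toContinuousLinearMap (Matrix.toEuclideanLin A)) x‖^2 ≤ ‖x‖^2 := by
    rw [norm_sq_eq_dot, norm_sq_eq_dot]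
    simpa [LinearMap.coe_toContinuousLinearMap', toEuclideanLin_apply'] using h x
  nlinarith [norm_nonneg ((LinearMap.toContinuousLinearMap (Matrix.toEuclideanLin A)) x),
    norm_nonneg x]

/-- projection bound: for a symmetric idempotent `Q`, `xᵀQx ≤ xᵀx`. -/
lemma dot_proj_le (Q : Matrix (Fin l) (Fin l) ℝ) (hQQ : Q * Q = Q) (hQt : Qᵀ = Q)
    (x : Fin l → ℝ) : x ⬝ᵥ (Q *ᵥ x) ≤ x ⬝ᵥ x := by
  set y := Q *ᵥ x with hy
  have hyy : y ⬝ᵥ y = x ⬝ᵥ y := by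
    rw [hy, dot_mulVec_mulVec, hQt, hQQ]
  have hcs := abs_dot_le x y
  have h0 : 0 ≤ x ⬝ᵥ y := by rw [← hyy]; exact dot_self_nonneg y
  rcases eq_or_lt_of_le h0 with h|h
  · rw [← h]; exact dot_self_nonneg x
  · have h2 : x ⬝ᵥ y ≤ Real.sqrt (x ⬝ᵥ x) * Real.sqrt (y ⬝ᵥ y) := (le_abs_self _).trans hcs
    have h6 : x ⬝ᵥ y ≤ Real.sqrt (x ⬝ᵥ x) * Real.sqrt (x ⬝ᵥ y) := by
      have h6' := h2; rw [hyy] at h6'; exact h6' 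
    have h7 := mul_le_mul h6 h6 h0 (by positivity)
    have h8 : (Real.sqrt (x ⬝ᵥ x) * Real.sqrt (x ⬝ᵥ y))
        * (Real.sqrt (x ⬝ᵥ x) * Real.sqrt (x ⬝ᵥ y)) = (x ⬝ᵥ x) * (x ⬝ᵥ y) := by
      rw [mul_mul_mul_comm, Real.mul_self_sqrt (dot_self_nonneg x), Real.mul_self_sqrt h0]
    exact le_of_mul_le_mul_right (by linarith) h

/-- mInner and traces -/
lemma mInner_eq_trace (X Y : Matrix (Fin p) (Fin l) ℝ) :
    mInner X Y = Matrix.trace (Xᵀ * Y) := by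
  simp only [mInner, Matrix.trace, Matrix.diag, Matrix.mul_apply, Matrix.transpose_apply]
  rw [Finset.sum_comm]

section Spectral
variable (A : Matrix (Fin p) (Fin l) ℝ)

noncomputable def hGram : (Aᵀ * A).IsHermitian := by
  simpa [Matrix.conjTranspose_eq_transpose_of_trivial] using
    Matrix.isHermitian_conjTranspose_mul_self A
noncomputable def dEV (i : Fin l) : ℝ := (hGram A).eigenvalues i
noncomputable def vEV (i : Fin l) : Fin l → ℝ := ((hGram A).eigenvectorBasis i : Fin l → ℝ)
noncomputable def Vmat : Matrix (Fin l) (Fin l) ℝ := Matrix.of fun k i => vEV A i k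

lemma gram_mulVec (i : Fin l) : (Aᵀ * A) *ᵥ vEV A i = dEV A i • vEV A i :=
  (hGram A).mulVec_eigenvectorBasis i

lemma vEV_dot (i j : Fin l) : vEV A i ⬝ᵥ vEV A j = if i = j then 1 else 0 := by
  have h := (hGram A).eigenvectorBasis.orthonormal
  rw [orthonormal_iff_ite] at h
  simpa [PiLp.inner_apply, dotProduct, vEV, mul_comm] using h i j

lemma VtV : (Vmat A)ᵀ * Vmat A = 1 := by
  ext i j
  simp only [Matrix.mul_apply, Matrix.transpose_apply, Vmat, Matrix.of_apply, Matrix.one_apply]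
  simpa [dotProduct] using vEV_dot A i j

lemma VVt : Vmat A * (Vmat A)ᵀ = 1 := by rw [mul_eq_one_comm]; exact VtV A

lemma gram_spectral : Aᵀ * A = Vmat A * Matrix.diagonal (dEV A) * (Vmat A)ᵀ := by
  have h : (Aᵀ * A) * Vmat A = Vmat A * Matrix.diagonal (dEV A) := by
    ext k i
    have h1 : (Aᵀ * A * Vmat A) k i = ((Aᵀ * A) *ᵥ vEV A i) k := by
      simp [Matrix.mul_apply, Matrix.mulVec, dotProduct, Vmat]
    rw [h1, gram_mulVec, Matrix.mul_diagonal]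
    simp [Vmat, mul_comm]
  calc Aᵀ * A = (Aᵀ * A) * (Vmat A * (Vmat A)ᵀ) := by rw [VVt, Matrix.mul_one]
  _ = ((Aᵀ * A) * Vmat A) * (Vmat A)ᵀ := by simp only [Matrix.mul_assoc]
  _ = Vmat A * Matrix.diagonal (dEV A) * (Vmat A)ᵀ := by rw [h]

lemma conj_mul (a b : Fin l → ℝ) :
    (Vmat A * Matrix.diagonal a * (Vmat A)ᵀ) * (Vmat A * Matrix.diagonal b * (Vmat A)ᵀ)
      = Vmat A * Matrix.diagonal (a * b) * (Vmat A)ᵀ := by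
  have : (Vmat A * Matrix.diagonal a * (Vmat A)ᵀ) * (Vmat A * Matrix.diagonal b * (Vmat A)ᵀ)
      = Vmat A * (Matrix.diagonal a * ((Vmat A)ᵀ * Vmat A) * Matrix.diagonal b) * (Vmat A)ᵀ := by
    simp only [Matrix.mul_assoc]
  rw [this, VtV, Matrix.mul_one, Matrix.diagonal_mul_diagonal]
  rfl

lemma dot_A_vEV (i : Fin l) : (A *ᵥ vEV A i) ⬝ᵥ (A *ᵥ vEV A i) = dEV A i := by
  rw [dot_mulVec_mulVec, gram_mulVec, dotProduct_smul, smul_eq_mul, vEV_dot]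
  simp

lemma dEV_nonneg (i : Fin l) : 0 ≤ dEV A i := by
  rw [← dot_A_vEV]; exact dot_self_nonneg _

lemma nucNorm_eq_sum : nucNorm A = ∑ i, Real.sqrt (dEV A i) := rfl

/-- trace in the eigenbasis -/
lemma mInner_eq_sum_eigen (B : Matrix (Fin p) (Fin l) ℝ) :
    mInner B A = ∑ i, (B *ᵥ vEV A i) ⬝ᵥ (A *ᵥ vEV A i) := by
  have key : ∀ (M : Matrix (Fin l) (Fin l) ℝ) (i : Fin l),
      vEV A i ⬝ᵥ (M *ᵥ vEV A i) = ((Vmat A)ᵀ * M * Vmat A) i i := by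
    intro M i
    simp only [Matrix.mul_apply, dotProduct, Matrix.mulVec, Matrix.transpose_apply,
      Vmat, Matrix.of_apply, dotProduct, Finset.mul_sum, Finset.sum_mul]
    rw [Finset.sum_comm]
    apply Finset.sum_congr rfl; intro b _
    apply Finset.sum_congr rfl; intro c _
    ring
  calc mInner B A = Matrix.trace (Bᵀ * A) := mInner_eq_trace B A
  _ = Matrix.trace ((Bᵀ * A) * (Vmat A * (Vmat A)ᵀ)) := by rw [VVt, Matrix.mul_one]
  _ = Matrix.trace (((Bᵀ * A) * Vmat A) * (Vmat A)ᵀ) := by simp only [Matrix.mul_assoc]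
  _ = Matrix.trace ((Vmat A)ᵀ * ((Bᵀ * A) * Vmat A)) := by rw [Matrix.trace_mul_comm]
  _ = ∑ i, ((Vmat A)ᵀ * (Bᵀ * A) * Vmat A) i i := by
      simp [Matrix.trace, Matrix.diag, Matrix.mul_assoc]
  _ = ∑ i, vEV A i ⬝ᵥ ((Bᵀ * A) *ᵥ vEV A i) := by
      apply Finset.sum_congr rfl; intro i _; rw [key]
  _ = ∑ i, (B *ᵥ vEV A i) ⬝ᵥ (A *ᵥ vEV A i) := by
      apply Finset.sum_congr rfl; intro i _; rw [dot_mulVec_mulVec]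

/-- trace duality -/
lemma abs_mInner_le (B : Matrix (Fin p) (Fin l) ℝ) :
    |mInner B A| ≤ opNorm B * nucNorm A := by
  rw [mInner_eq_sum_eigen A B, nucNorm_eq_sum, Finset.mul_sum]
  refine (Finset.abs_sum_le_sum_abs _ _).trans (Finset.sum_le_sum ?_)
  intro i _
  refine (abs_dot_le _ _).trans ?_
  rw [dot_A_vEV]
  apply mul_le_mul_of_nonneg_right _ (Real.sqrt_nonneg _)
  have h1 : (B *ᵥ vEV A i) ⬝ᵥ (B *ᵥ vEV A i) ≤ (opNorm B)^2 * 1 := by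
    have := mulVec_dot_le_opNorm B (vEV A i)
    simpa [vEV_dot] using this
  rw [mul_one] at h1
  calc Real.sqrt ((B *ᵥ vEV A i) ⬝ᵥ (B *ᵥ vEV A i)) ≤ Real.sqrt ((opNorm B)^2) :=
    Real.sqrt_le_sqrt (by simpa using h1)
  _ = opNorm B := Real.sqrt_sq (norm_nonneg _)

noncomputable def gF (i : Fin l) : ℝ := if dEV A i = 0 then 0 else (Real.sqrt (dEV A i))⁻¹
noncomputable def hF (i : Fin l) : ℝ :=
  if dEV A i = 0 then 0 else (Real.sqrt (dEV A i))⁻¹ * (dEV A i)⁻¹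
noncomputable def eF (i : Fin l) : ℝ := if dEV A i = 0 then 0 else 1

noncomputable def Mmat : Matrix (Fin l) (Fin l) ℝ := Vmat A * Matrix.diagonal (gF A) * (Vmat A)ᵀ
noncomputable def Smat : Matrix (Fin l) (Fin l) ℝ := Vmat A * Matrix.diagonal (hF A) * (Vmat A)ᵀ
noncomputable def Qmat : Matrix (Fin l) (Fin l) ℝ := Vmat A * Matrix.diagonal (eF A) * (Vmat A)ᵀ
noncomputable def Bdual : Matrix (Fin p) (Fin l) ℝ := A * Mmat A

lemma Mt : (Mmat A)ᵀ = Mmat A := by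
  simp [Mmat, Matrix.transpose_mul, Matrix.diagonal_transpose, Matrix.mul_assoc]

lemma Qt : (Qmat A)ᵀ = Qmat A := by
  simp [Qmat, Matrix.transpose_mul, Matrix.diagonal_transpose, Matrix.mul_assoc]

lemma sqrt_dEV_ne (i : Fin l) (hd : dEV A i ≠ 0) : Real.sqrt (dEV A i) ≠ 0 := by
  intro h0
  exact hd (by rw [← Real.mul_self_sqrt (dEV_nonneg A i), h0, mul_zero])

lemma MS_left : Mmat A = Smat A * (Aᵀ * A) := by
  have key : hF A * dEV A = gF A := by
    funext i
    simp only [Pi.mul_apply, hF, gF]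
    by_cases hd : dEV A i = 0
    · simp [hd]
    · rw [if_neg hd, if_neg hd, mul_assoc, inv_mul_cancel₀ hd, mul_one]
  unfold Mmat Smat
  rw [gram_spectral A, conj_mul, key]

lemma MS_right : Mmat A = (Aᵀ * A) * Smat A := by
  have key : dEV A * hF A = gF A := by
    funext i
    simp only [Pi.mul_apply, hF, gF]
    by_cases hd : dEV A i = 0
    · simp [hd]
    · rw [if_neg hd, if_neg hd, show dEV A i * ((Real.sqrt (dEV A i))⁻¹ * (dEV A i)⁻¹)
        = (dEV A i * (dEV A i)⁻¹) * (Real.sqrt (dEV A i))⁻¹ from by ring,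
        mul_inv_cancel₀ hd, one_mul]
  unfold Mmat Smat
  rw [gram_spectral A, conj_mul, key]

lemma BtB : (Bdual A)ᵀ * Bdual A = Qmat A := by
  have h : (Bdual A)ᵀ * Bdual A = Mmat A * ((Aᵀ * A) * Mmat A) := by
    rw [Bdual, Matrix.transpose_mul, Mt]
    simp only [Matrix.mul_assoc]
  have key : gF A * (dEV A * gF A) = eF A := by
    funext i
    simp only [Pi.mul_apply, gF, eF]
    by_cases hd : dEV A i = 0
    · simp [hd]
    · rw [if_neg hd, if_neg hd]
      have hs := Real.mul_self_sqrt (dEV_nonneg A i)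
      calc (Real.sqrt (dEV A i))⁻¹ * (dEV A i * (Real.sqrt (dEV A i))⁻¹)
          = dEV A i * (Real.sqrt (dEV A i) * Real.sqrt (dEV A i))⁻¹ := by
            rw [mul_inv]; ring
      _ = dEV A i * (dEV A i)⁻¹ := by rw [hs]
      _ = 1 := mul_inv_cancel₀ hd
  rw [h, gram_spectral A]
  unfold Mmat Qmat
  rw [conj_mul, conj_mul, key]

lemma Q_eq_MgramM : Qmat A = Mmat A * (Aᵀ * A) * Mmat A := by
  rw [← BtB, Bdual, Matrix.transpose_mul, Mt]
  simp only [Matrix.mul_assoc]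

lemma QQ : Qmat A * Qmat A = Qmat A := by
  have key : eF A * eF A = eF A := by
    funext i
    simp only [Pi.mul_apply, eF]
    by_cases hd : dEV A i = 0 <;> simp [hd]
  unfold Qmat
  rw [conj_mul, key]

lemma trace_conj (a : Fin l → ℝ) :
    Matrix.trace (Vmat A * Matrix.diagonal a * (Vmat A)ᵀ) = ∑ i, a i := by
  rw [Matrix.trace_mul_comm, ← Matrix.mul_assoc, VtV, Matrix.one_mul, Matrix.trace_diagonal]

lemma mInner_Bdual : mInner (Bdual A) A = nucNorm A := by
  have h1 : (Bdual A)ᵀ * A = Mmat A * (Aᵀ * A) := by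
    rw [Bdual, Matrix.transpose_mul, Mt, Matrix.mul_assoc]
  rw [mInner_eq_trace, h1, gram_spectral A]
  unfold Mmat
  rw [conj_mul, trace_conj, nucNorm_eq_sum]
  apply Finset.sum_congr rfl
  intro i _
  simp only [Pi.mul_apply, gF]
  by_cases hd : dEV A i = 0
  · simp [hd]
  · rw [if_neg hd]
    have hsn := sqrt_dEV_ne A i hd
    field_simp
    rw [Real.sq_sqrt (dEV_nonneg A i)]

lemma opNorm_Bdual_le : opNorm (Bdual A) ≤ 1 := by
  apply opNorm_le_one_of_dot
  intro x
  rw [dot_mulVec_mulVec, BtB]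
  exact dot_proj_le _ (QQ A) (Qt A) x

end Spectral

/-- mInner linearity -/
lemma mInner_add_right (B X Y : Matrix (Fin p) (Fin l) ℝ) :
    mInner B (X + Y) = mInner B X + mInner B Y := by
  simp [mInner, Matrix.add_apply, mul_add, Finset.sum_add_distrib]

lemma mInner_add_left (X Y B : Matrix (Fin p) (Fin l) ℝ) :
    mInner (X + Y) B = mInner X B + mInner Y B := by
  simp [mInner, Matrix.add_apply, add_mul, Finset.sum_add_distrib]

lemma mInner_sub_right (B X Y : Matrix (Fin p) (Fin l) ℝ) :
    mInner B (X - Y) = mInner B X - mInner B Y := by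
  simp [mInner, Matrix.sub_apply, mul_sub, Finset.sum_sub_distrib]

lemma mInner_smul_left (c : ℝ) (X B : Matrix (Fin p) (Fin l) ℝ) :
    mInner (c • X) B = c * mInner X B := by
  simp [mInner, Matrix.smul_apply, Finset.mul_sum, mul_assoc]

lemma mInner_sum_left {ι : Type*} (s : Finset ι) (Z : ι → Matrix (Fin p) (Fin l) ℝ)
    (B : Matrix (Fin p) (Fin l) ℝ) :
    mInner (∑ i ∈ s, Z i) B = ∑ i ∈ s, mInner (Z i) B := by
  simp only [mInner, Matrix.sum_apply, Finset.sum_mul]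
  rw [show (∑ i, ∑ j, ∑ x ∈ s, Z x i j * B i j) = ∑ i, ∑ x ∈ s, ∑ j, Z x i j * B i j from
    Finset.sum_congr rfl fun i _ => Finset.sum_comm, Finset.sum_comm]
  

lemma nucNorm_nonneg (A : Matrix (Fin p) (Fin l) ℝ) : 0 ≤ nucNorm A := by
  apply Finset.sum_nonneg; intro i _; exact Real.sqrt_nonneg _

lemma eig_congr {m : ℕ} {X Y : Matrix (Fin m) (Fin m) ℝ} (h : X = Y)
    (hX : X.IsHermitian) (hY : Y.IsHermitian) : hX.eigenvalues = hY.eigenvalues := by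
  subst h; rfl

lemma nucNorm_congr {X Y : Matrix (Fin p) (Fin l) ℝ} (h : Xᵀ * X = Yᵀ * Y) :
    nucNorm X = nucNorm Y := by
  unfold nucNorm
  rw [eig_congr h (hGram X)
    (hGram Y)]

lemma nucNorm_neg (X : Matrix (Fin p) (Fin l) ℝ) : nucNorm (-X) = nucNorm X :=
  nucNorm_congr (by simp)

/-- triangle inequality for the nuclear norm -/
lemma nucNorm_add_le (X Y : Matrix (Fin p) (Fin l) ℝ) :
    nucNorm (X + Y) ≤ nucNorm X + nucNorm Y := by
  have h := mInner_Bdual (X + Y)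
  rw [mInner_add_right] at h
  have h1 := (abs_mInner_le X (Bdual (X + Y))).trans
    (mul_le_mul_of_nonneg_right (opNorm_Bdual_le (X + Y)) (nucNorm_nonneg X))
  have h2 := (abs_mInner_le Y (Bdual (X + Y))).trans
    (mul_le_mul_of_nonneg_right (opNorm_Bdual_le (X + Y)) (nucNorm_nonneg Y))
  rw [one_mul] at h1 h2
  calc nucNorm (X + Y) = mInner (Bdual (X + Y)) X + mInner (Bdual (X + Y)) Y := h.symm
  _ ≤ |mInner (Bdual (X + Y)) X| + |mInner (Bdual (X + Y)) Y| := by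
      gcongr <;> exact le_abs_self _
  _ ≤ nucNorm X + nucNorm Y := by gcongr

lemma nucNorm_sub_le (X Y : Matrix (Fin p) (Fin l) ℝ) :
    nucNorm X - nucNorm Y ≤ nucNorm (X - Y) := by
  have h := nucNorm_add_le (X - Y) Y
  rw [sub_add_cancel] at h
  linarith

/-- decomposability -/
lemma nucNorm_add_of_orth (X C : Matrix (Fin p) (Fin l) ℝ)
    (h1 : Xᵀ * C = 0) (h2 : X * Cᵀ = 0) :
    nucNorm X + nucNorm C ≤ nucNorm (X + C) := by
  have h1' : Cᵀ * X = 0 := by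
    have := congrArg Matrix.transpose h1
    simpa [Matrix.transpose_mul] using this
  have hMM : Mmat X * Mmat C = 0 := by
    rw [MS_left X, MS_right C]
    have : Smat X * (Xᵀ * X) * (Cᵀ * C * Smat C)
        = Smat X * (Xᵀ * (X * Cᵀ) * (C * Smat C)) := by simp only [Matrix.mul_assoc]
    rw [this, h2, Matrix.mul_zero, Matrix.zero_mul, Matrix.mul_zero]
  have hB12 : (Bdual X)ᵀ * Bdual C = 0 := by
    unfold Bdual
    rw [Matrix.transpose_mul, Mt]
    have : Mmat X * Xᵀ * (C * Mmat C) = Mmat X * ((Xᵀ * C) * Mmat C) := by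
      simp only [Matrix.mul_assoc]
    rw [this, h1, Matrix.zero_mul, Matrix.mul_zero]
  have hB21 : (Bdual C)ᵀ * Bdual X = 0 := by
    unfold Bdual
    rw [Matrix.transpose_mul, Mt]
    have : Mmat C * Cᵀ * (X * Mmat X) = Mmat C * ((Cᵀ * X) * Mmat X) := by
      simp only [Matrix.mul_assoc]
    rw [this, h1', Matrix.zero_mul, Matrix.mul_zero]
  have hQXQC : Qmat X * Qmat C = 0 := by
    rw [Q_eq_MgramM X, Q_eq_MgramM C]
    have : Mmat X * (Xᵀ * X) * Mmat X * (Mmat C * (Cᵀ * C) * Mmat C)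
        = Mmat X * (Xᵀ * X) * ((Mmat X * Mmat C) * ((Cᵀ * C) * Mmat C)) := by
      simp only [Matrix.mul_assoc]
    rw [this, hMM, Matrix.zero_mul, Matrix.mul_zero]
  have hQCQX : Qmat C * Qmat X = 0 := by
    have := congrArg Matrix.transpose hQXQC
    simpa [Matrix.transpose_mul, Qt] using this
  set B := Bdual X + Bdual C with hB
  have hBtB : Bᵀ * B = Qmat X + Qmat C := by
    rw [hB, Matrix.transpose_add, Matrix.add_mul, Matrix.mul_add, Matrix.mul_add,
      BtB, BtB, hB12, hB21]
    simp
  have hQsum_idem : (Qmat X + Qmat C) * (Qmat X + Qmat C) = Qmat X + Qmat C := by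
    rw [Matrix.add_mul, Matrix.mul_add, Matrix.mul_add, QQ, QQ, hQXQC, hQCQX]
    simp
  have hQsum_t : (Qmat X + Qmat C)ᵀ = Qmat X + Qmat C := by
    rw [Matrix.transpose_add, Qt, Qt]
  have hopB : opNorm B ≤ 1 := by
    apply opNorm_le_one_of_dot
    intro x
    rw [dot_mulVec_mulVec, hBtB]
    exact dot_proj_le _ hQsum_idem hQsum_t x
  have hcross1 : mInner (Bdual X) C = 0 := by
    rw [mInner_eq_trace]
    unfold Bdual
    rw [Matrix.transpose_mul, Mt, Matrix.mul_assoc, h1, Matrix.mul_zero, Matrix.trace_zero]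
  have hcross2 : mInner (Bdual C) X = 0 := by
    rw [mInner_eq_trace]
    unfold Bdual
    rw [Matrix.transpose_mul, Mt, Matrix.mul_assoc, h1', Matrix.mul_zero, Matrix.trace_zero]
  have hach : mInner B (X + C) = nucNorm X + nucNorm C := by
    rw [hB, mInner_add_right, mInner_add_left, mInner_add_left,
      mInner_Bdual, mInner_Bdual, hcross1, hcross2]
    ring
  calc nucNorm X + nucNorm C = mInner B (X + C) := hach.symm
  _ ≤ |mInner B (X + C)| := le_abs_self _
  _ ≤ opNorm B * nucNorm (X + C) := abs_mInner_le _ _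
  _ ≤ 1 * nucNorm (X + C) := by gcongr; exact nucNorm_nonneg _
  _ = nucNorm (X + C) := one_mul _

/-- perpPart orthogonality -/
lemma toEuclideanLin_perpPart (A B : Matrix (Fin p) (Fin l) ℝ) :
    Matrix.toEuclideanLin (perpPart A B)
      = projMap (colSpace A)ᗮ ∘ₗ Matrix.toEuclideanLin B ∘ₗ projMap (colSpace Aᵀ)ᗮ := by
  unfold perpPart
  exact Matrix.toEuclideanLin.apply_symm_apply _

lemma transpose_mulVec_orth (A : Matrix (Fin p) (Fin l) ℝ)
    (y : EuclideanSpace ℝ (Fin p)) (hy : y ∈ (colSpace A)ᗮ) :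
    Aᵀ *ᵥ (y : Fin p → ℝ) = 0 := by
  funext k
  have hc : Matrix.toEuclideanLin A (WithLp.toLp 2 (Pi.single k 1 : Fin l → ℝ) : EuclideanSpace ℝ (Fin l))
      ∈ colSpace A := LinearMap.mem_range_self _ _
  have h0 := (Submodule.mem_orthogonal _ _).mp hy _ hc
  rw [PiLp.inner_apply] at h0
  simp only [RCLike.inner_apply, starRingEnd_apply] at h0
  have hcv : ∀ i, (Matrix.toEuclideanLin A
      (WithLp.toLp 2 (Pi.single k 1 : Fin l → ℝ) : EuclideanSpace ℝ (Fin l))) i = A i k := by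
    intro i
    show (A *ᵥ Pi.single k 1) i = A i k
    simp [Matrix.mulVec, dotProduct, Pi.single_apply]
  simp only [hcv] at h0
  show ∑ i, Aᵀ k i * y i = 0
  simp only [Matrix.transpose_apply]
  calc ∑ i, A i k * y i = ∑ i, star (A i k) * y i := by simp
  _ = 0 := by rw [← h0]; exact Finset.sum_congr rfl fun i _ => mul_comm _ _

lemma perp_orth_left (A B : Matrix (Fin p) (Fin l) ℝ) : Aᵀ * perpPart A B = 0 := by
  have hEq := toEuclideanLin_perpPart A B
  ext k j
  have hx : ∀ x : EuclideanSpace ℝ (Fin l), Aᵀ *ᵥ ((perpPart A B) *ᵥ (x : Fin l → ℝ)) = 0 := by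
    intro x
    have h1 : (perpPart A B) *ᵥ (x : Fin l → ℝ)
        = ((projMap (colSpace A)ᗮ ∘ₗ Matrix.toEuclideanLin B ∘ₗ projMap (colSpace Aᵀ)ᗮ) x
            : Fin p → ℝ) := by
      rw [← hEq]; rfl
    rw [h1]
    apply transpose_mulVec_orth
    show (projMap (colSpace A)ᗮ) _ ∈ (colSpace A)ᗮ
    unfold projMap
    exact Submodule.coe_mem _
  have h2 := hx (WithLp.toLp 2 (Pi.single j 1 : Fin l → ℝ) : EuclideanSpace ℝ (Fin l))
  have h3 := congrFun h2 k
  rw [Matrix.mulVec_mulVec] at h3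
  simpa [Matrix.mulVec, dotProduct, Pi.single_apply] using h3

lemma perp_orth_right (A B : Matrix (Fin p) (Fin l) ℝ) : A * (perpPart A B)ᵀ = 0 := by
  have key : perpPart A B * Aᵀ = 0 := by
    have hEq := toEuclideanLin_perpPart A B
    ext k j
    have hx : ∀ x : EuclideanSpace ℝ (Fin p),
        (perpPart A B) *ᵥ (Aᵀ *ᵥ (x : Fin p → ℝ)) = 0 := by
      intro x
      set z : EuclideanSpace ℝ (Fin l) := Matrix.toEuclideanLin Aᵀ x with hz
      have hzz : Aᵀ *ᵥ (x : Fin p → ℝ) = (z : Fin l → ℝ) := rfl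
      have hzmem : z ∈ colSpace Aᵀ := LinearMap.mem_range_self _ _
      have hproj : (projMap (colSpace Aᵀ)ᗮ) z = 0 := by
        unfold projMap
        have : (colSpace Aᵀ)ᗮ.orthogonalProjectionOnto z = 0 :=
          Submodule.orthogonalProjectionOnto_apply_of_mem_orthogonal
            (Submodule.le_orthogonal_orthogonal _ hzmem)
        simp [this]
      have h1 : (perpPart A B) *ᵥ (z : Fin l → ℝ)
          = ((projMap (colSpace A)ᗮ ∘ₗ Matrix.toEuclideanLin B ∘ₗ projMap (colSpace Aᵀ)ᗮ) z
              : Fin p → ℝ) := by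
        rw [← hEq]; rfl
      rw [hzz, h1]
      simp only [LinearMap.comp_apply, hproj, map_zero]
      rfl
    have h2 := hx (WithLp.toLp 2 (Pi.single j 1 : Fin p → ℝ) : EuclideanSpace ℝ (Fin p))
    have h3 := congrFun h2 k
    rw [Matrix.mulVec_mulVec] at h3
    simpa [Matrix.mulVec, dotProduct, Pi.single_apply] using h3
  have := congrArg Matrix.transpose key
  simpa [Matrix.transpose_mul] using this

/-- The core statistical lemma. -/
lemma main_aux {n : ℕ} (X : Fin n → Matrix (Fin p) (Fin l) ℝ) (eps : Fin n → ℝ)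
    (A0 Ahat : Matrix (Fin p) (Fin l) ℝ) (lam : ℝ) (hlam : 0 < lam)
    (hmin : (1/(n:ℝ)) * ∑ i, (eps i + mInner (X i) (A0 - Ahat))^2 + lam * nucNorm Ahat
      ≤ (1/(n:ℝ)) * ∑ i, (eps i)^2 + lam * nucNorm A0)
    (hSig : 3 * opNorm ((1/(n:ℝ)) • ∑ i, eps i • X i) ≤ lam) :
    nucNorm (perpPart A0 (A0 - Ahat)) ≤
      5 * nucNorm ((A0 - Ahat) - perpPart A0 (A0 - Ahat)) := by
  set P : Matrix (Fin p) (Fin l) ℝ := perpPart A0 (A0 - Ahat) with hP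
  set R : Matrix (Fin p) (Fin l) ℝ := A0 - Ahat - P with hR
  have hPl : A0ᵀ * P = 0 := perp_orth_left A0 (A0 - Ahat)
  have hPr : A0 * Pᵀ = 0 := perp_orth_right A0 (A0 - Ahat)
  -- decomposability
  have hdec : nucNorm A0 + nucNorm P ≤ nucNorm (A0 - P) := by
    have h := nucNorm_add_of_orth A0 (-P)
      (by rw [Matrix.mul_neg, hPl, neg_zero])
      (by rw [Matrix.transpose_neg, Matrix.mul_neg, hPr, neg_zero])
    rw [nucNorm_neg] at h
    simpa [sub_eq_add_neg] using h
  -- triangle inequalities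
  have htri : nucNorm (A0 - Ahat) ≤ nucNorm R + nucNorm P := by
    have h := nucNorm_add_le R P
    rw [hR, sub_add_cancel] at h
    exact h
  have hAhat_lb : nucNorm A0 + nucNorm P - nucNorm R ≤ nucNorm Ahat := by
    have h1 : nucNorm (A0 - P) - nucNorm R ≤ nucNorm ((A0 - P) - R) := nucNorm_sub_le _ _
    have h2 : (A0 - P) - R = Ahat := by rw [hR]; abel
    rw [h2] at h1
    linarith
  -- expansion of the minimization inequality
  have hsumsplit : ∑ i, (eps i + mInner (X i) (A0 - Ahat))^2
      = ∑ i, (eps i)^2 + 2 * ∑ i, eps i * mInner (X i) (A0 - Ahat)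
        + ∑ i, (mInner (X i) (A0 - Ahat))^2 := by
    rw [Finset.mul_sum, ← Finset.sum_add_distrib, ← Finset.sum_add_distrib]
    apply Finset.sum_congr rfl
    intro i _
    ring
  have hexp : (1/(n:ℝ)) * ∑ i, (mInner (X i) (A0 - Ahat))^2
      + 2 * ((1/(n:ℝ)) * ∑ i, eps i * mInner (X i) (A0 - Ahat))
      ≤ lam * (nucNorm A0 - nucNorm Ahat) := by
    rw [hsumsplit] at hmin
    nlinarith [hmin]
  have hmm_nonneg : 0 ≤ (1/(n:ℝ)) * ∑ i, (mInner (X i) (A0 - Ahat))^2 := by positivity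
  -- duality step
  have hSm : mInner ((1/(n:ℝ)) • ∑ i, eps i • X i) (A0 - Ahat)
      = (1/(n:ℝ)) * ∑ i, eps i * mInner (X i) (A0 - Ahat) := by
    rw [mInner_smul_left, mInner_sum_left]
    congr 1
    apply Finset.sum_congr rfl
    intro i _
    rw [mInner_smul_left]
  have hdualbd := abs_mInner_le (A0 - Ahat) ((1/(n:ℝ)) • ∑ i, eps i • X i)
  have hopS : opNorm ((1/(n:ℝ)) • ∑ i, eps i • X i) * nucNorm (A0 - Ahat)
      ≤ (lam/3) * nucNorm (A0 - Ahat) :=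
    mul_le_mul_of_nonneg_right (by linarith) (nucNorm_nonneg _)
  have hlow : -((2/3) * lam * nucNorm (A0 - Ahat))
      ≤ 2 * ((1/(n:ℝ)) * ∑ i, eps i * mInner (X i) (A0 - Ahat)) := by
    rw [← hSm]
    have := neg_abs_le (mInner ((1/(n:ℝ)) • ∑ i, eps i • X i) (A0 - Ahat))
    nlinarith [hdualbd, hopS, this]
  -- combine
  have hNR : 0 ≤ nucNorm R := nucNorm_nonneg R
  have hNP : 0 ≤ nucNorm P := nucNorm_nonneg P
  have hch : -((2/3) * lam * (nucNorm R + nucNorm P)) ≤ lam * (nucNorm R - nucNorm P) := by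
    have h1 : lam * (nucNorm A0 - nucNorm Ahat) ≤ lam * (nucNorm R - nucNorm P) := by
      apply mul_le_mul_of_nonneg_left _ hlam.le
      linarith
    have h2 : -((2/3) * lam * (nucNorm R + nucNorm P))
        ≤ -((2/3) * lam * nucNorm (A0 - Ahat)) := by
      have := mul_le_mul_of_nonneg_left htri (by linarith : (0:ℝ) ≤ (2/3) * lam)
      linarith
    linarith
  nlinarith [hch, hlam]

end StmtAux

open StmtAux in
/-- Lemma 4: if `λ ≥ 3‖Σ‖` then, with `H = A₀ − Â`,
`‖P⊥_{A₀}(H)‖_* ≤ 5 ‖P_{A₀}(H)‖_*`. -/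
theorem stmt10 :
    ∀     (n p l : ℕ) (hn : 0 < n) (hp : 0 < p) (hl : 0 < l)
    (μ : Measure ℝ) [IsProbabilityMeasure μ]
    (φ : ℕ → ℝ → ℝ) (hφL2 : ∀ j, MemLp (φ j) 2 μ)
    (hON : ∀ j k, ∫ x, φ j x * φ k x ∂μ = if j = k then (1:ℝ) else 0)
    (f : Fin p → ℝ → ℝ) (hfL2 : ∀ k, MemLp (f k) 2 μ)
    (A0 : Matrix (Fin p) (Fin l) ℝ)
    (hA0 : ∀ (k : Fin p) (j : Fin l), A0 k j = ∫ x, f k x * φ (j : ℕ) x ∂μ)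
    (Wv : Fin n → Fin p → ℝ) (tv : Fin n → ℝ) (ξv : Fin n → ℝ) (σ : ℝ) (hσ : 0 < σ)
    (lam : ℝ) (hlam : 0 < lam)
    (Ahat : Matrix (Fin p) (Fin l) ℝ)
    (hAhat : ∀ A : Matrix (Fin p) (Fin l) ℝ,
      (1/(n:ℝ)) * ∑ i, ((∑ k, Wv i k * f k (tv i)) + σ * ξv i
          - mInner (Xmat l φ (Wv i) (tv i)) Ahat)^2 + lam * nucNorm Ahat
        ≤ (1/(n:ℝ)) * ∑ i, ((∑ k, Wv i k * f k (tv i)) + σ * ξv i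
          - mInner (Xmat l φ (Wv i) (tv i)) A)^2 + lam * nucNorm A)
    (hlamSig : 3 * opNorm ((1/(n:ℝ)) • ∑ i, ((∑ k, Wv i k * remainder μ φ (f k) l (tv i))
        + σ * ξv i) • Xmat l φ (Wv i) (tv i)) ≤ lam)
    ,
    nucNorm (perpPart A0 (A0 - Ahat)) ≤
      5 * nucNorm ((A0 - Ahat) - perpPart A0 (A0 - Ahat)) := by
  intro n p l hn hp hl μ _ φ hφL2 hON f hfL2 A0 hA0 Wv tv ξv σ hσ lam hlam Ahat hAhat hlamSig
  classical
  have key0 : ∀ i : Fin n,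
      (∑ k, Wv i k * f k (tv i)) + σ * ξv i - mInner (Xmat l φ (Wv i) (tv i)) A0
        = (∑ k, Wv i k * remainder μ φ (f k) l (tv i)) + σ * ξv i := by
    intro i
    have key : ∀ a : Fin p, (∑ b : Fin l, Wv i a * φ (b : ℕ) (tv i) * A0 a b)
        = Wv i a * ∑ j ∈ Finset.range l, (∫ y, f a y * φ j y ∂μ) * φ j (tv i) := by
      intro a
      rw [Finset.mul_sum,
        ← Fin.sum_univ_eq_sum_range
          (fun j => Wv i a * ((∫ y, f a y * φ j y ∂μ) * φ j (tv i))) l]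
      apply Finset.sum_congr rfl
      intro b _
      rw [hA0]
      ring
    have hmi : mInner (Xmat l φ (Wv i) (tv i)) A0
        = ∑ a, Wv i a * ∑ j ∈ Finset.range l, (∫ y, f a y * φ j y ∂μ) * φ j (tv i) := by
      simp only [mInner, Xmat, Matrix.of_apply]
      exact Finset.sum_congr rfl fun a _ => key a
    rw [hmi]
    simp only [remainder, mul_sub]
    rw [Finset.sum_sub_distrib]
    ring
  have key1 : ∀ i : Fin n,
      (∑ k, Wv i k * f k (tv i)) + σ * ξv i - mInner (Xmat l φ (Wv i) (tv i)) Ahat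
        = ((∑ k, Wv i k * remainder μ φ (f k) l (tv i)) + σ * ξv i)
          + mInner (Xmat l φ (Wv i) (tv i)) (A0 - Ahat) := by
    intro i
    have h1 := StmtAux.mInner_sub_right (Xmat l φ (Wv i) (tv i)) A0 Ahat
    have h2 := key0 i
    linarith
  have hmin := hAhat A0
  rw [show (∑ i, ((∑ k, Wv i k * f k (tv i)) + σ * ξv i
        - mInner (Xmat l φ (Wv i) (tv i)) Ahat)^2)
      = ∑ i, (((∑ k, Wv i k * remainder μ φ (f k) l (tv i)) + σ * ξv i)
        + mInner (Xmat l φ (Wv i) (tv i)) (A0 - Ahat))^2 from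
      Finset.sum_congr rfl fun i _ => by rw [key1 i],
    show (∑ i, ((∑ k, Wv i k * f k (tv i)) + σ * ξv i
        - mInner (Xmat l φ (Wv i) (tv i)) A0)^2)
      = ∑ i, ((∑ k, Wv i k * remainder μ φ (f k) l (tv i)) + σ * ξv i)^2 from
      Finset.sum_congr rfl fun i _ => by rw [key0 i]] at hmin
  exact StmtAux.main_aux (fun i => Xmat l φ (Wv i) (tv i))
    (fun i => (∑ k, Wv i k * remainder μ φ (f k) l (tv i)) + σ * ξv i)
    A0 Ahat lam hlam hmin hlamSig
end

section
/- If λ ≥ 3‖Σ‖, then the nuclear-norm penalized estimator satisfies ‖Â‖₂ ≤ ‖Â‖_* ≤ 5 ‖A₀‖_*. -/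
open MeasureTheory ProbabilityTheory Matrix
open scoped ENNReal

set_option linter.unusedVariables false

section AuxDev


lemma sum_comm4 {M : Type*} [AddCommMonoid M] {α β γ δ : Type*} [Fintype α] [Fintype β]
    [Fintype γ] [Fintype δ] (f : α → β → γ → δ → M) :
    ∑ j, ∑ i, ∑ a, ∑ b, f j i a b = ∑ a, ∑ b, ∑ i, ∑ j, f j i a b := by
  calc ∑ j, ∑ i, ∑ a, ∑ b, f j i a b
      = ∑ j, ∑ a, ∑ i, ∑ b, f j i a b :=
        Finset.sum_congr rfl fun j _ => Finset.sum_comm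
    _ = ∑ a, ∑ j, ∑ i, ∑ b, f j i a b := Finset.sum_comm
    _ = ∑ a, ∑ j, ∑ b, ∑ i, f j i a b :=
        Finset.sum_congr rfl fun a _ => Finset.sum_congr rfl fun j _ => Finset.sum_comm
    _ = ∑ a, ∑ b, ∑ j, ∑ i, f j i a b :=
        Finset.sum_congr rfl fun a _ => Finset.sum_comm
    _ = ∑ a, ∑ b, ∑ i, ∑ j, f j i a b :=
        Finset.sum_congr rfl fun a _ => Finset.sum_congr rfl fun b _ => Finset.sum_comm

lemma sqrt_sum_le {ι : Type*} (s : Finset ι) (f : ι → ℝ) (hf : ∀ i ∈ s, 0 ≤ f i) :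
    Real.sqrt (∑ i ∈ s, f i) ≤ ∑ i ∈ s, Real.sqrt (f i) := by
  classical
  induction s using Finset.induction_on with
  | empty => simp
  | insert a s hnot ih =>
    rw [Finset.sum_insert hnot, Finset.sum_insert hnot]
    have ha : 0 ≤ f a := hf a (Finset.mem_insert_self a s)
    have hs : ∀ i ∈ s, 0 ≤ f i := fun i hi => hf i (Finset.mem_insert_of_mem hi)
    have hs' : 0 ≤ ∑ i ∈ s, f i := Finset.sum_nonneg hs
    have key : Real.sqrt (f a + ∑ i ∈ s, f i) ≤ Real.sqrt (f a) + Real.sqrt (∑ i ∈ s, f i) := by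
      have h1 : f a + ∑ i ∈ s, f i ≤ (Real.sqrt (f a) + Real.sqrt (∑ i ∈ s, f i))^2 := by
        nlinarith [Real.sq_sqrt ha, Real.sq_sqrt hs', Real.sqrt_nonneg (f a),
          Real.sqrt_nonneg (∑ i ∈ s, f i)]
      calc Real.sqrt (f a + ∑ i ∈ s, f i)
          ≤ Real.sqrt ((Real.sqrt (f a) + Real.sqrt (∑ i ∈ s, f i))^2) := Real.sqrt_le_sqrt h1
        _ = Real.sqrt (f a) + Real.sqrt (∑ i ∈ s, f i) := Real.sqrt_sq (by positivity)
    exact key.trans (by linarith [ih hs])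

variable {p l : ℕ}

noncomputable def svdV (B : Matrix (Fin p) (Fin l) ℝ) (j a : Fin l) : ℝ :=
  (show (Bᵀ * B).IsHermitian by
    simpa [Matrix.conjTranspose_eq_transpose_of_trivial] using
      Matrix.isHermitian_conjTranspose_mul_self B).eigenvectorBasis j a

noncomputable def svdE (B : Matrix (Fin p) (Fin l) ℝ) (j : Fin l) : ℝ :=
  (show (Bᵀ * B).IsHermitian by
    simpa [Matrix.conjTranspose_eq_transpose_of_trivial] using
      Matrix.isHermitian_conjTranspose_mul_self B).eigenvalues j

lemma nucNorm_eq (B : Matrix (Fin p) (Fin l) ℝ) :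
    nucNorm B = ∑ j, Real.sqrt (svdE B j) := rfl

lemma svdV_ortho (B : Matrix (Fin p) (Fin l) ℝ) (i j : Fin l) :
    ∑ a, svdV B i a * svdV B j a = if i = j then 1 else 0 := by
  have h := (show (Bᵀ * B).IsHermitian by
    simpa [Matrix.conjTranspose_eq_transpose_of_trivial] using
      Matrix.isHermitian_conjTranspose_mul_self B).eigenvectorBasis.orthonormal
  rw [orthonormal_iff_ite] at h
  have h2 := h i j
  simpa [PiLp.inner_apply, RCLike.inner_apply, conj_trivial, svdV, mul_comm] using h2

lemma svdV_ortho' (B : Matrix (Fin p) (Fin l) ℝ) (a b : Fin l) :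
    ∑ j, svdV B j a * svdV B j b = if a = b then 1 else 0 := by
  classical
  set V : Matrix (Fin l) (Fin l) ℝ := Matrix.of fun i a => svdV B i a with hV
  have h1 : V * Vᵀ = 1 := by
    ext i j
    simp [Matrix.mul_apply, hV, Matrix.one_apply, svdV_ortho B i j]
  have h2 : Vᵀ * V = 1 := mul_eq_one_comm.mp h1
  calc ∑ j, svdV B j a * svdV B j b = (Vᵀ * V) a b := by
        simp [Matrix.mul_apply, hV]
    _ = if a = b then 1 else 0 := by rw [h2]; simp [Matrix.one_apply]

lemma svdV_eig (B : Matrix (Fin p) (Fin l) ℝ) (j a : Fin l) :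
    ∑ b, (Bᴴ * B) a b * svdV B j b = svdE B j * svdV B j a := by
  have h := (show (Bᵀ * B).IsHermitian by
    simpa [Matrix.conjTranspose_eq_transpose_of_trivial] using
      Matrix.isHermitian_conjTranspose_mul_self B).mulVec_eigenvectorBasis j
  have h2 := congrFun h a
  simpa [Matrix.mulVec, dotProduct, svdV, svdE] using h2

lemma svdBv (B : Matrix (Fin p) (Fin l) ℝ) (j k : Fin l) :
    ∑ i, (B *ᵥ svdV B j) i * (B *ᵥ svdV B k) i = svdE B k * (if j = k then 1 else 0) := by
  have h1 : ∀ i, (B *ᵥ svdV B j) i * (B *ᵥ svdV B k) i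
      = ∑ a, ∑ b, (svdV B j a * svdV B k b) * (B i a * B i b) := by
    intro i
    simp only [Matrix.mulVec, dotProduct, Finset.sum_mul_sum]
    exact Finset.sum_congr rfl fun a _ => Finset.sum_congr rfl fun b _ => by ring
  calc ∑ i, (B *ᵥ svdV B j) i * (B *ᵥ svdV B k) i
      = ∑ i, ∑ a, ∑ b, (svdV B j a * svdV B k b) * (B i a * B i b) :=
        Finset.sum_congr rfl fun i _ => h1 i
    _ = ∑ a, ∑ b, ∑ i, (svdV B j a * svdV B k b) * (B i a * B i b) := by
        rw [Finset.sum_comm]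
        exact Finset.sum_congr rfl fun a _ => Finset.sum_comm
    _ = ∑ a, svdV B j a * ∑ b, (Bᴴ * B) a b * svdV B k b := by
        refine Finset.sum_congr rfl fun a _ => ?_
        rw [Finset.mul_sum]
        refine Finset.sum_congr rfl fun b _ => ?_
        rw [Matrix.mul_apply]
        simp only [Matrix.conjTranspose_apply, star_trivial, Finset.sum_mul, Finset.mul_sum]
        exact Finset.sum_congr rfl fun i _ => by ring
    _ = ∑ a, svdV B j a * (svdE B k * svdV B k a) := by
        refine Finset.sum_congr rfl fun a _ => ?_
        rw [svdV_eig]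
    _ = svdE B k * ∑ a, svdV B j a * svdV B k a := by
        rw [Finset.mul_sum]; exact Finset.sum_congr rfl fun a _ => by ring
    _ = svdE B k * (if j = k then 1 else 0) := by rw [svdV_ortho]

lemma svdE_nonneg (B : Matrix (Fin p) (Fin l) ℝ) (j : Fin l) : 0 ≤ svdE B j := by
  have h := svdBv B j j
  rw [if_pos rfl, mul_one] at h
  rw [← h]
  exact Finset.sum_nonneg fun i _ => mul_self_nonneg _

lemma nucNorm_nonneg (B : Matrix (Fin p) (Fin l) ℝ) : 0 ≤ nucNorm B :=
  Finset.sum_nonneg fun j _ => Real.sqrt_nonneg _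

lemma mInner_eq_sum (B M : Matrix (Fin p) (Fin l) ℝ) :
    mInner M B = ∑ j, ∑ i, (M *ᵥ svdV B j) i * (B *ᵥ svdV B j) i := by
  have h1 : ∀ (j : Fin l) (i : Fin p), (M *ᵥ svdV B j) i * (B *ᵥ svdV B j) i
      = ∑ a, ∑ b, (M i a * B i b) * (svdV B j a * svdV B j b) := by
    intro j i
    simp only [Matrix.mulVec, dotProduct, Finset.sum_mul_sum]
    exact Finset.sum_congr rfl fun a _ => Finset.sum_congr rfl fun b _ => by ring
  symm
  calc ∑ j, ∑ i, (M *ᵥ svdV B j) i * (B *ᵥ svdV B j) i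
      = ∑ j, ∑ i, ∑ a, ∑ b, (M i a * B i b) * (svdV B j a * svdV B j b) :=
        Finset.sum_congr rfl fun j _ => Finset.sum_congr rfl fun i _ => h1 j i
    _ = ∑ a, ∑ b, ∑ i, ∑ j, (M i a * B i b) * (svdV B j a * svdV B j b) := sum_comm4 _
    _ = ∑ a, ∑ b, (∑ i, M i a * B i b) * (∑ j, svdV B j a * svdV B j b) := by
        refine Finset.sum_congr rfl fun a _ => Finset.sum_congr rfl fun b _ => ?_
        rw [Finset.sum_mul_sum]
    _ = ∑ a, ∑ b, (∑ i, M i a * B i b) * (if a = b then 1 else 0) := by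
        simp_rw [svdV_ortho']
    _ = ∑ a, ∑ i, M i a * B i a := by
        refine Finset.sum_congr rfl fun a _ => ?_
        simp [mul_ite, mul_one, mul_zero, Finset.sum_ite_eq]
    _ = mInner M B := by rw [Finset.sum_comm]; rfl


variable {p l : ℕ}

variable {p l : ℕ}

lemma opNorm_nonneg (M : Matrix (Fin p) (Fin l) ℝ) : 0 ≤ opNorm M := norm_nonneg _

lemma opNorm_neg (M : Matrix (Fin p) (Fin l) ℝ) : opNorm (-M) = opNorm M := by
  unfold opNorm
  rw [map_neg, map_neg, norm_neg]

lemma opNorm_mulVec_le (M : Matrix (Fin p) (Fin l) ℝ) (w : Fin l → ℝ) :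
    Real.sqrt (∑ i, (M *ᵥ w) i ^ 2) ≤ opNorm M * Real.sqrt (∑ a, w a ^ 2) := by
  have h := (LinearMap.toContinuousLinearMap (Matrix.toEuclideanLin M)).le_opNorm
    ((WithLp.equiv 2 (Fin l → ℝ)).symm w)
  rw [LinearMap.coe_toContinuousLinearMap'] at h
  rw [WithLp.equiv_symm_apply, Matrix.toEuclideanLin_apply_piLp_toLp] at h
  rw [EuclideanSpace.norm_eq, EuclideanSpace.norm_eq] at h
  simpa [Real.norm_eq_abs, sq_abs, opNorm] using h

lemma sum_mul_le_sqrt {m : ℕ} (u w : Fin m → ℝ) :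
    ∑ i, u i * w i ≤ Real.sqrt (∑ i, u i ^ 2) * Real.sqrt (∑ i, w i ^ 2) := by
  have h := real_inner_le_norm ((WithLp.equiv 2 (Fin m → ℝ)).symm u)
    ((WithLp.equiv 2 (Fin m → ℝ)).symm w)
  rw [EuclideanSpace.norm_eq, EuclideanSpace.norm_eq] at h
  simpa [PiLp.inner_apply, RCLike.inner_apply, conj_trivial,
    Real.norm_eq_abs, sq_abs, mul_comm] using h

-- opNorm_le_one via bound
lemma opNorm_le_of_bound (M : Matrix (Fin p) (Fin l) ℝ) {c : ℝ} (hc : 0 ≤ c)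
    (h : ∀ w : Fin l → ℝ, Real.sqrt (∑ i, (M *ᵥ w) i ^ 2) ≤ c * Real.sqrt (∑ a, w a ^ 2)) :
    opNorm M ≤ c := by
  unfold opNorm
  refine ContinuousLinearMap.opNorm_le_bound _ hc fun x => ?_
  have h2 := h ((WithLp.equiv 2 (Fin l → ℝ)) x)
  rw [LinearMap.coe_toContinuousLinearMap']
  have hx : Matrix.toEuclideanLin M x
      = (WithLp.equiv 2 (Fin p → ℝ)).symm (M *ᵥ (WithLp.equiv 2 (Fin l → ℝ)) x) :=
    Matrix.toEuclideanLin_apply M x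
  rw [hx, EuclideanSpace.norm_eq, EuclideanSpace.norm_eq]
  simpa [WithLp.equiv_symm_apply, WithLp.equiv_apply, Real.norm_eq_abs, sq_abs] using h2


lemma mInner_neg_left (A B : Matrix (Fin p) (Fin l) ℝ) : mInner (-A) B = -(mInner A B) := by
  simp [mInner, Finset.sum_neg_distrib]

lemma mInner_add_right (C A B : Matrix (Fin p) (Fin l) ℝ) :
    mInner C (A + B) = mInner C A + mInner C B := by
  simp [mInner, Matrix.add_apply, mul_add, Finset.sum_add_distrib]

lemma mInner_sub_right (C A B : Matrix (Fin p) (Fin l) ℝ) :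
    mInner C (A - B) = mInner C A - mInner C B := by
  simp [mInner, Matrix.sub_apply, mul_sub, Finset.sum_sub_distrib]

lemma mInner_smul_left (c : ℝ) (A B : Matrix (Fin p) (Fin l) ℝ) :
    mInner (c • A) B = c * mInner A B := by
  simp [mInner, Matrix.smul_apply, Finset.mul_sum, mul_assoc]

lemma mInner_sum_left {n : ℕ} (A : Fin n → Matrix (Fin p) (Fin l) ℝ) (B : Matrix (Fin p) (Fin l) ℝ) :
    mInner (∑ i, A i) B = ∑ i, mInner (A i) B := by
  simp only [mInner, Matrix.sum_apply, Finset.sum_mul]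
  calc ∑ r, ∑ c, ∑ i, A i r c * B r c
      = ∑ r, ∑ i, ∑ c, A i r c * B r c :=
        Finset.sum_congr rfl fun r _ => Finset.sum_comm
    _ = ∑ i, ∑ r, ∑ c, A i r c * B r c := Finset.sum_comm

-- duality inequality
lemma mInner_le_opNorm_nucNorm (M B : Matrix (Fin p) (Fin l) ℝ) :
    mInner M B ≤ opNorm M * nucNorm B := by
  rw [mInner_eq_sum B M, nucNorm_eq]
  rw [Finset.mul_sum]
  refine Finset.sum_le_sum fun j _ => ?_
  have h1 : ∑ i, (M *ᵥ svdV B j) i * (B *ᵥ svdV B j) i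
      ≤ Real.sqrt (∑ i, (M *ᵥ svdV B j) i ^ 2) * Real.sqrt (∑ i, (B *ᵥ svdV B j) i ^ 2) :=
    sum_mul_le_sqrt _ _
  have h2 : ∑ i, (B *ᵥ svdV B j) i ^ 2 = svdE B j := by
    have := svdBv B j j
    rw [if_pos rfl, mul_one] at this
    rw [← this]
    exact Finset.sum_congr rfl fun i _ => by ring
  have h3 : Real.sqrt (∑ i, (M *ᵥ svdV B j) i ^ 2) ≤ opNorm M := by
    have h4 := opNorm_mulVec_le M (svdV B j)
    have h5 : ∑ a, svdV B j a ^ 2 = 1 := by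
      have := svdV_ortho B j j
      rw [if_pos rfl] at this
      rw [← this]
      exact Finset.sum_congr rfl fun a _ => by ring
    rwa [h5, Real.sqrt_one, mul_one] at h4
  calc ∑ i, (M *ᵥ svdV B j) i * (B *ᵥ svdV B j) i
      ≤ Real.sqrt (∑ i, (M *ᵥ svdV B j) i ^ 2) * Real.sqrt (∑ i, (B *ᵥ svdV B j) i ^ 2) := h1
    _ ≤ opNorm M * Real.sqrt (svdE B j) := by
        rw [h2]
        exact mul_le_mul_of_nonneg_right h3 (Real.sqrt_nonneg _)

lemma abs_mInner_le (M B : Matrix (Fin p) (Fin l) ℝ) :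
    |mInner M B| ≤ opNorm M * nucNorm B := by
  rcases abs_cases (mInner M B) with ⟨h, _⟩ | ⟨h, _⟩
  · rw [h]; exact mInner_le_opNorm_nucNorm M B
  · rw [h]
    have := mInner_le_opNorm_nucNorm (-M) B
    rwa [mInner_neg_left, opNorm_neg] at this

-- dual attainment
noncomputable def dualC (B : Matrix (Fin p) (Fin l) ℝ) : Matrix (Fin p) (Fin l) ℝ :=
  Matrix.of fun i a => ∑ j,
    (if svdE B j = 0 then 0 else (Real.sqrt (svdE B j))⁻¹) * ((B *ᵥ svdV B j) i * svdV B j a)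

lemma mInner_dualC (B : Matrix (Fin p) (Fin l) ℝ) : mInner (dualC B) B = nucNorm B := by
  classical
  set c : Fin l → ℝ := fun j => if svdE B j = 0 then 0 else (Real.sqrt (svdE B j))⁻¹ with hc
  have key : mInner (dualC B) B = ∑ j, c j * svdE B j := by
    unfold mInner dualC
    calc ∑ i, ∑ a, (∑ j, c j * ((B *ᵥ svdV B j) i * svdV B j a)) * B i a
        = ∑ i, ∑ a, ∑ j, c j * ((B *ᵥ svdV B j) i * (svdV B j a * B i a)) := by
          refine Finset.sum_congr rfl fun i _ => Finset.sum_congr rfl fun a _ => ?_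
          rw [Finset.sum_mul]
          exact Finset.sum_congr rfl fun j _ => by ring
      _ = ∑ i, ∑ j, ∑ a, c j * ((B *ᵥ svdV B j) i * (svdV B j a * B i a)) :=
          Finset.sum_congr rfl fun i _ => Finset.sum_comm
      _ = ∑ j, ∑ i, ∑ a, c j * ((B *ᵥ svdV B j) i * (svdV B j a * B i a)) := Finset.sum_comm
      _ = ∑ j, c j * ∑ i, (B *ᵥ svdV B j) i * (∑ a, B i a * svdV B j a) := by
          refine Finset.sum_congr rfl fun j _ => ?_
          simp only [Finset.mul_sum]
          refine Finset.sum_congr rfl fun i _ => ?_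
          refine Finset.sum_congr rfl fun a _ => by ring
      _ = ∑ j, c j * svdE B j := by
          refine Finset.sum_congr rfl fun j _ => ?_
          have h := svdBv B j j
          rw [if_pos rfl, mul_one] at h
          have e : ∑ i, (B *ᵥ svdV B j) i * (∑ a, B i a * svdV B j a)
              = ∑ i, (B *ᵥ svdV B j) i * (B *ᵥ svdV B j) i := rfl
          rw [e, h]
  rw [key, nucNorm_eq]
  refine Finset.sum_congr rfl fun j _ => ?_
  by_cases h : svdE B j = 0
  · simp [hc, h]
  · have hpos : 0 < svdE B j := lt_of_le_of_ne (svdE_nonneg B j) (Ne.symm h)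
    have hs : Real.sqrt (svdE B j) * Real.sqrt (svdE B j) = svdE B j :=
      Real.mul_self_sqrt (le_of_lt hpos)
    simp only [hc, if_neg h]
    have hne : Real.sqrt (svdE B j) ≠ 0 := ne_of_gt (Real.sqrt_pos.mpr hpos)
    rw [← hs]
    field_simp
    rw [Real.sqrt_sq (Real.sqrt_nonneg _)]


lemma opNorm_dualC (B : Matrix (Fin p) (Fin l) ℝ) : opNorm (dualC B) ≤ 1 := by
  classical
  set c : Fin l → ℝ := fun j => if svdE B j = 0 then 0 else (Real.sqrt (svdE B j))⁻¹ with hc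
  refine opNorm_le_of_bound _ zero_le_one fun w => ?_
  rw [one_mul]
  refine Real.sqrt_le_sqrt ?_
  set d : Fin l → ℝ := fun j => ∑ a, svdV B j a * w a with hd
  have hCw : ∀ i, (dualC B *ᵥ w) i = ∑ j, c j * d j * (B *ᵥ svdV B j) i := by
    intro i
    calc (dualC B *ᵥ w) i
        = ∑ a, (∑ j, c j * ((B *ᵥ svdV B j) i * svdV B j a)) * w a := by
          simp only [Matrix.mulVec, dotProduct, dualC, Matrix.of_apply]
          rfl
      _ = ∑ a, ∑ j, c j * ((B *ᵥ svdV B j) i * svdV B j a) * w a :=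
          Finset.sum_congr rfl fun a _ => Finset.sum_mul _ _ _
      _ = ∑ j, ∑ a, c j * ((B *ᵥ svdV B j) i * svdV B j a) * w a := Finset.sum_comm
      _ = ∑ j, c j * d j * (B *ᵥ svdV B j) i := by
          refine Finset.sum_congr rfl fun j _ => ?_
          have hdj : d j = ∑ a, svdV B j a * w a := by rw [hd]
          rw [hdj]
          simp only [Finset.mul_sum, Finset.sum_mul]
          exact Finset.sum_congr rfl fun a _ => by ring
  have hsq : ∑ i, (dualC B *ᵥ w) i ^ 2 = ∑ j, (c j * d j)^2 * svdE B j := by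
    calc ∑ i, (dualC B *ᵥ w) i ^ 2
        = ∑ i, ∑ j, ∑ k, (c j * d j * (c k * d k)) *
            ((B *ᵥ svdV B j) i * (B *ᵥ svdV B k) i) := by
          refine Finset.sum_congr rfl fun i _ => ?_
          rw [hCw i, sq, Finset.sum_mul_sum]
          exact Finset.sum_congr rfl fun j _ => Finset.sum_congr rfl fun k _ => by ring
      _ = ∑ j, ∑ k, (c j * d j * (c k * d k)) *
            (∑ i, (B *ᵥ svdV B j) i * (B *ᵥ svdV B k) i) := by
          rw [Finset.sum_comm]
          refine Finset.sum_congr rfl fun j _ => ?_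
          rw [Finset.sum_comm]
          refine Finset.sum_congr rfl fun k _ => ?_
          exact (Finset.mul_sum _ _ _).symm
      _ = ∑ j, ∑ k, (c j * d j * (c k * d k)) * (svdE B k * (if j = k then 1 else 0)) := by
          refine Finset.sum_congr rfl fun j _ => Finset.sum_congr rfl fun k _ => ?_
          rw [svdBv]
      _ = ∑ j, (c j * d j)^2 * svdE B j := by
          refine Finset.sum_congr rfl fun j _ => ?_
          rw [Finset.sum_eq_single j]
          · rw [if_pos rfl]; ring
          · intro k _ hk; rw [if_neg (Ne.symm hk)]; ring
          · intro h; exact absurd (Finset.mem_univ j) h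
  have hterm : ∀ j, (c j * d j)^2 * svdE B j ≤ d j ^ 2 := by
    intro j
    by_cases h : svdE B j = 0
    · simp [hc, h, sq_nonneg]
    · have hpos : 0 < svdE B j := lt_of_le_of_ne (svdE_nonneg B j) (Ne.symm h)
      have hs : Real.sqrt (svdE B j) ^ 2 = svdE B j := Real.sq_sqrt (le_of_lt hpos)
      have hne : Real.sqrt (svdE B j) ≠ 0 := ne_of_gt (Real.sqrt_pos.mpr hpos)
      simp only [hc, if_neg h]
      have h2 : ((Real.sqrt (svdE B j))⁻¹)^2 * svdE B j = 1 := by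
        rw [← hs]
        field_simp
        rw [Real.sqrt_sq (Real.sqrt_nonneg _)]
      calc ((Real.sqrt (svdE B j))⁻¹ * d j)^2 * svdE B j
          = (((Real.sqrt (svdE B j))⁻¹)^2 * svdE B j) * d j ^ 2 := by ring
        _ ≤ d j ^ 2 := by rw [h2, one_mul]
  have hdw : ∑ j, d j ^ 2 = ∑ a, w a ^ 2 := by
    calc ∑ j, d j ^ 2
        = ∑ j, ∑ a, ∑ b, (w a * w b) * (svdV B j a * svdV B j b) := by
          refine Finset.sum_congr rfl fun j _ => ?_
          rw [hd, sq, Finset.sum_mul_sum]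
          exact Finset.sum_congr rfl fun a _ => Finset.sum_congr rfl fun b _ => by ring
      _ = ∑ a, ∑ b, (w a * w b) * ∑ j, svdV B j a * svdV B j b := by
          rw [Finset.sum_comm]
          refine Finset.sum_congr rfl fun a _ => ?_
          rw [Finset.sum_comm]
          refine Finset.sum_congr rfl fun b _ => ?_
          rw [Finset.mul_sum]
      _ = ∑ a, ∑ b, (w a * w b) * (if a = b then 1 else 0) := by
          simp_rw [svdV_ortho']
      _ = ∑ a, w a ^ 2 := by
          refine Finset.sum_congr rfl fun a _ => ?_
          rw [Finset.sum_eq_single a]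
          · rw [if_pos rfl]; ring
          · intro k _ hk; rw [if_neg (Ne.symm hk)]; ring
          · intro h; exact absurd (Finset.mem_univ a) h
  calc ∑ i, (dualC B *ᵥ w) i ^ 2 = ∑ j, (c j * d j)^2 * svdE B j := hsq
    _ ≤ ∑ j, d j ^ 2 := Finset.sum_le_sum fun j _ => hterm j
    _ = ∑ a, w a ^ 2 := hdw

lemma nucNorm_add_le (A B : Matrix (Fin p) (Fin l) ℝ) :
    nucNorm (A + B) ≤ nucNorm A + nucNorm B := by
  have h1 : nucNorm (A + B) = mInner (dualC (A + B)) A + mInner (dualC (A + B)) B := by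
    rw [← mInner_add_right, mInner_dualC]
  have h2 : mInner (dualC (A + B)) A ≤ nucNorm A := by
    refine le_trans (le_abs_self _) (le_trans (abs_mInner_le _ _) ?_)
    calc opNorm (dualC (A + B)) * nucNorm A ≤ 1 * nucNorm A :=
          mul_le_mul_of_nonneg_right (opNorm_dualC _) (nucNorm_nonneg _)
      _ = nucNorm A := one_mul _
  have h3 : mInner (dualC (A + B)) B ≤ nucNorm B := by
    refine le_trans (le_abs_self _) (le_trans (abs_mInner_le _ _) ?_)
    calc opNorm (dualC (A + B)) * nucNorm B ≤ 1 * nucNorm B :=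
          mul_le_mul_of_nonneg_right (opNorm_dualC _) (nucNorm_nonneg _)
      _ = nucNorm B := one_mul _
  linarith

lemma eig_congr {m : ℕ} {M N : Matrix (Fin m) (Fin m) ℝ} (h : M = N)
    (hM : M.IsHermitian) (hN : N.IsHermitian) (i : Fin m) :
    hM.eigenvalues i = hN.eigenvalues i := by subst h; rfl

lemma nucNorm_neg (A : Matrix (Fin p) (Fin l) ℝ) : nucNorm (-A) = nucNorm A := by
  unfold nucNorm
  refine Finset.sum_congr rfl fun i _ => ?_
  congr 1
  exact eig_congr (by simp) _ _ i

lemma frobNorm_le_nucNorm (B : Matrix (Fin p) (Fin l) ℝ) : frobNorm B ≤ nucNorm B := by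
  have h1 : mInner B B = ∑ j, svdE B j := by
    rw [mInner_eq_sum B B]
    refine Finset.sum_congr rfl fun j _ => ?_
    have := svdBv B j j
    rw [if_pos rfl, mul_one] at this
    exact this
  have h2 : frobNorm B = Real.sqrt (∑ j, svdE B j) := by
    rw [← h1]
    unfold frobNorm mInner
    congr 1
    exact Finset.sum_congr rfl fun i _ => Finset.sum_congr rfl fun j _ => by ring
  rw [h2, nucNorm_eq]
  exact sqrt_sum_le _ _ fun j _ => svdE_nonneg B j



lemma main_ineq {n p l : ℕ} (hn : 0 < n) (X : Fin n → Matrix (Fin p) (Fin l) ℝ)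
    (r : Fin n → ℝ) (A0 Ahat : Matrix (Fin p) (Fin l) ℝ) (lam : ℝ) (hlam : 0 < lam)
    (hkey : (1/(n:ℝ)) * ∑ i, (r i + mInner (X i) (A0 - Ahat))^2 + lam * nucNorm Ahat
        ≤ (1/(n:ℝ)) * ∑ i, (r i)^2 + lam * nucNorm A0)
    (hlamSig : 3 * opNorm ((1/(n:ℝ)) • ∑ i, r i • X i) ≤ lam) :
    nucNorm Ahat ≤ 5 * nucNorm A0 := by
  have hn' : (0:ℝ) < n := by exact_mod_cast hn
  have hexp : ∑ i, (r i + mInner (X i) (A0 - Ahat))^2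
      = ∑ i, (r i)^2 + (2 * ∑ i, r i * mInner (X i) (A0 - Ahat)
          + ∑ i, (mInner (X i) (A0 - Ahat))^2) := by
    calc ∑ i, (r i + mInner (X i) (A0 - Ahat))^2
        = ∑ i, ((r i)^2 + (2 * (r i * mInner (X i) (A0 - Ahat))
            + (mInner (X i) (A0 - Ahat))^2)) :=
          Finset.sum_congr rfl fun i _ => by ring
      _ = ∑ i, (r i)^2 + ∑ i, (2 * (r i * mInner (X i) (A0 - Ahat))
            + (mInner (X i) (A0 - Ahat))^2) := Finset.sum_add_distrib
      _ = ∑ i, (r i)^2 + (∑ i, 2 * (r i * mInner (X i) (A0 - Ahat))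
            + ∑ i, (mInner (X i) (A0 - Ahat))^2) := by rw [Finset.sum_add_distrib]
      _ = ∑ i, (r i)^2 + (2 * ∑ i, r i * mInner (X i) (A0 - Ahat)
            + ∑ i, (mInner (X i) (A0 - Ahat))^2) := by rw [← Finset.mul_sum]
  have hSig : mInner ((1/(n:ℝ)) • ∑ i, r i • X i) (A0 - Ahat)
      = (1/(n:ℝ)) * ∑ i, r i * mInner (X i) (A0 - Ahat) := by
    rw [mInner_smul_left, mInner_sum_left]
    congr 1
    exact Finset.sum_congr rfl fun i _ => mInner_smul_left _ _ _
  have hOp : opNorm ((1/(n:ℝ)) • ∑ i, r i • X i) ≤ lam/3 := by linarith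
  have hmsq : 0 ≤ (1/(n:ℝ)) * ∑ i, (mInner (X i) (A0 - Ahat))^2 := by positivity
  have e : (1/(n:ℝ)) * ∑ i, (r i + mInner (X i) (A0 - Ahat))^2
      = (1/(n:ℝ)) * ∑ i, (r i)^2 + 2 * ((1/(n:ℝ)) * ∑ i, r i * mInner (X i) (A0 - Ahat))
        + (1/(n:ℝ)) * ∑ i, (mInner (X i) (A0 - Ahat))^2 := by
    rw [hexp]; ring
  have h1 : lam * nucNorm Ahat ≤ lam * nucNorm A0
      - 2 * mInner ((1/(n:ℝ)) • ∑ i, r i • X i) (A0 - Ahat) := by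
    rw [hSig]; linarith
  have htri : nucNorm (A0 - Ahat) ≤ nucNorm A0 + nucNorm Ahat := by
    rw [sub_eq_add_neg]
    exact (nucNorm_add_le _ _).trans (by rw [nucNorm_neg])
  have hb : -(mInner ((1/(n:ℝ)) • ∑ i, r i • X i) (A0 - Ahat))
      ≤ (lam/3) * (nucNorm A0 + nucNorm Ahat) := by
    calc -(mInner ((1/(n:ℝ)) • ∑ i, r i • X i) (A0 - Ahat))
        ≤ |mInner ((1/(n:ℝ)) • ∑ i, r i • X i) (A0 - Ahat)| := neg_le_abs _
      _ ≤ opNorm ((1/(n:ℝ)) • ∑ i, r i • X i) * nucNorm (A0 - Ahat) := abs_mInner_le _ _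
      _ ≤ (lam/3) * (nucNorm A0 + nucNorm Ahat) := by
          refine mul_le_mul hOp htri (nucNorm_nonneg _) ?_
          linarith [opNorm_nonneg ((1/(n:ℝ)) • ∑ i, r i • X i)]
  have hcomb : lam * nucNorm Ahat ≤ lam * nucNorm A0
      + 2 * ((lam/3) * (nucNorm A0 + nucNorm Ahat)) := by linarith
  have hcomb2 : lam * nucNorm Ahat ≤ lam * (5 * nucNorm A0) := by nlinarith [hcomb]
  exact (mul_le_mul_iff_of_pos_left hlam).mp hcomb2

end AuxDev

/-- Display (26): if `λ ≥ 3‖Σ‖` then `‖Â‖₂ ≤ ‖Â‖_* ≤ 5‖A₀‖_*`. -/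
theorem stmt19 :
    ∀     (n p l : ℕ) (hn : 0 < n) (hp : 0 < p) (hl : 0 < l)
    (μ : Measure ℝ) [IsProbabilityMeasure μ]
    (φ : ℕ → ℝ → ℝ) (hφL2 : ∀ j, MemLp (φ j) 2 μ)
    (hON : ∀ j k, ∫ x, φ j x * φ k x ∂μ = if j = k then (1:ℝ) else 0)
    (f : Fin p → ℝ → ℝ) (hfL2 : ∀ k, MemLp (f k) 2 μ)
    (A0 : Matrix (Fin p) (Fin l) ℝ)
    (hA0 : ∀ (k : Fin p) (j : Fin l), A0 k j = ∫ x, f k x * φ (j : ℕ) x ∂μ)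
    (Wv : Fin n → Fin p → ℝ) (tv : Fin n → ℝ) (ξv : Fin n → ℝ) (σ : ℝ) (hσ : 0 < σ)
    (lam : ℝ) (hlam : 0 < lam)
    (Ahat : Matrix (Fin p) (Fin l) ℝ)
    (hAhat : ∀ A : Matrix (Fin p) (Fin l) ℝ,
      (1/(n:ℝ)) * ∑ i, ((∑ k, Wv i k * f k (tv i)) + σ * ξv i
          - mInner (Xmat l φ (Wv i) (tv i)) Ahat)^2 + lam * nucNorm Ahat
        ≤ (1/(n:ℝ)) * ∑ i, ((∑ k, Wv i k * f k (tv i)) + σ * ξv i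
          - mInner (Xmat l φ (Wv i) (tv i)) A)^2 + lam * nucNorm A)
    (hlamSig : 3 * opNorm ((1/(n:ℝ)) • ∑ i, ((∑ k, Wv i k * remainder μ φ (f k) l (tv i))
        + σ * ξv i) • Xmat l φ (Wv i) (tv i)) ≤ lam)
    ,
    frobNorm Ahat ≤ nucNorm Ahat ∧ nucNorm Ahat ≤ 5 * nucNorm A0 := by
  
  intro n p l hn hp hl μ _ φ hφL2 hON f hfL2 A0 hA0 Wv tv ξv σ hσ lam hlam Ahat hAhat hlamSig
  refine ⟨frobNorm_le_nucNorm Ahat, ?_⟩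
  have hdecomp : ∀ (i : Fin n) (A : Matrix (Fin p) (Fin l) ℝ),
      (∑ k, Wv i k * f k (tv i)) + σ * ξv i - mInner (Xmat l φ (Wv i) (tv i)) A
        = ((∑ k, Wv i k * remainder μ φ (f k) l (tv i)) + σ * ξv i)
          + mInner (Xmat l φ (Wv i) (tv i)) (A0 - A) := by
    intro i A
    have hmX : ∀ C : Matrix (Fin p) (Fin l) ℝ, mInner (Xmat l φ (Wv i) (tv i)) C
        = ∑ k, ∑ j : Fin l, Wv i k * (C k j * φ (j:ℕ) (tv i)) := by
      intro C
      unfold mInner Xmat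
      exact Finset.sum_congr rfl fun k _ => Finset.sum_congr rfl fun j _ => by
        simp only [Matrix.of_apply]; ring
    have hsum : ∑ k, Wv i k * f k (tv i)
        = (∑ k, Wv i k * remainder μ φ (f k) l (tv i))
          + mInner (Xmat l φ (Wv i) (tv i)) A0 := by
      have h1 : ∀ k : Fin p, f k (tv i) = remainder μ φ (f k) l (tv i)
          + ∑ j : Fin l, A0 k j * φ (j:ℕ) (tv i) := by
        intro k
        have h2 : ∑ j ∈ Finset.range l, (∫ y, f k y * φ j y ∂μ) * φ j (tv i)
            = ∑ j : Fin l, A0 k j * φ (j:ℕ) (tv i) := by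
          rw [Finset.sum_range]
          exact Finset.sum_congr rfl fun j _ => by rw [hA0 k j]
        rw [remainder, h2]; ring
      rw [hmX A0]
      calc ∑ k, Wv i k * f k (tv i)
          = ∑ k, (Wv i k * remainder μ φ (f k) l (tv i)
              + ∑ j : Fin l, Wv i k * (A0 k j * φ (j:ℕ) (tv i))) := by
            refine Finset.sum_congr rfl fun k _ => ?_
            rw [h1 k, mul_add, Finset.mul_sum]
        _ = (∑ k, Wv i k * remainder μ φ (f k) l (tv i))
              + ∑ k, ∑ j : Fin l, Wv i k * (A0 k j * φ (j:ℕ) (tv i)) :=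
            Finset.sum_add_distrib
    rw [mInner_sub_right, hsum]
    ring
  have hkey : (1/(n:ℝ)) * ∑ i, (((∑ k, Wv i k * remainder μ φ (f k) l (tv i)) + σ * ξv i)
        + mInner (Xmat l φ (Wv i) (tv i)) (A0 - Ahat))^2 + lam * nucNorm Ahat
      ≤ (1/(n:ℝ)) * ∑ i, (((∑ k, Wv i k * remainder μ φ (f k) l (tv i)) + σ * ξv i))^2
        + lam * nucNorm A0 := by
    have e1 : ∑ i, ((∑ k, Wv i k * f k (tv i)) + σ * ξv i
          - mInner (Xmat l φ (Wv i) (tv i)) Ahat)^2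
        = ∑ i, (((∑ k, Wv i k * remainder μ φ (f k) l (tv i)) + σ * ξv i)
          + mInner (Xmat l φ (Wv i) (tv i)) (A0 - Ahat))^2 :=
      Finset.sum_congr rfl fun i _ => by rw [hdecomp i Ahat]
    have e2 : ∑ i, ((∑ k, Wv i k * f k (tv i)) + σ * ξv i
          - mInner (Xmat l φ (Wv i) (tv i)) A0)^2
        = ∑ i, (((∑ k, Wv i k * remainder μ φ (f k) l (tv i)) + σ * ξv i))^2 :=
      Finset.sum_congr rfl fun i _ => by
        rw [hdecomp i A0]; simp [mInner]
    have h := hAhat A0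
    rw [e1, e2] at h
    exact h
  exact main_ineq hn (fun i => Xmat l φ (Wv i) (tv i))
    (fun i => (∑ k, Wv i k * remainder μ φ (f k) l (tv i)) + σ * ξv i)
    A0 Ahat lam hlam hkey hlamSig
end
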